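/- Let H : ℝ^k → ℝ be continuously differentiable, let N be a constant k×k real matrix with xᵀNx ≤ 0 for all x ∈ ℝ^k (N not necessarily symmetric), let Δt > 0, and suppose u₀, u₁ ∈ ℝ^k satisfy the average vector field relation (u₁ - u₀)/Δt = ∫₀¹ N ∇H((1-ξ)u₀ + ξu₁) dξ. Then the energy is dissipated monotonically: H(u₁) ≤ H(u₀). -/

import Mathlib

open Matrix

open scoped RealInnerProductSpace Gradient

/-!
The AVF step is a discrete gradient step: by the fundamental theorem of calculus along the
segment from `u₀` to `u₁`, the averaged gradient `g = ∫₀¹ ∇H((1-ξ)u₀ + ξu₁) dξ` satisfies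
`H u₁ - H u₀ = ⟪g, u₁ - u₀⟫` exactly, while the AVF relation says `u₁ - u₀ = Δt • N g`.
Hence `H u₁ - H u₀ = Δt • gᵀ N g ≤ 0`.
-/

section

variable {F : Type*} [NormedAddCommGroup F] [InnerProductSpace ℝ F] [CompleteSpace F]
  {H : F → ℝ}

theorem ContDiff.continuous_gradient (hH : ContDiff ℝ 1 H) : Continuous (∇ H) :=
  (InnerProductSpace.toDual ℝ F).symm.continuous.comp (hH.continuous_fderiv one_ne_zero)

theorem ContDiff.sub_eq_inner_integral_gradient_segment (hH : ContDiff ℝ 1 H) (u₀ u₁ : F) :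
    H u₁ - H u₀ = ⟪∫ ξ in (0:ℝ)..1, ∇ H ((1 - ξ) • u₀ + ξ • u₁), u₁ - u₀⟫ := by
  simp only [← AffineMap.lineMap_apply_module]
  have hderiv : ∀ ξ ∈ Set.uIcc (0:ℝ) 1, HasDerivAt (H ∘ AffineMap.lineMap u₀ u₁)
      ⟪∇ H (AffineMap.lineMap u₀ u₁ ξ), u₁ - u₀⟫ ξ := fun ξ _ => by
    rw [inner_gradient_left]
    exact (hH.differentiable one_ne_zero _).hasFDerivAt.comp_hasDerivAt ξ
      AffineMap.hasDerivAt_lineMap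
  have hcont : Continuous fun ξ : ℝ => ∇ H (AffineMap.lineMap u₀ u₁ ξ) :=
    hH.continuous_gradient.comp AffineMap.lineMap_continuous
  calc H u₁ - H u₀ = ∫ ξ in (0:ℝ)..1, ⟪∇ H (AffineMap.lineMap u₀ u₁ ξ), u₁ - u₀⟫ := by
        rw [intervalIntegral.integral_eq_sub_of_hasDerivAt hderiv
          ((hcont.inner continuous_const).intervalIntegrable 0 1)]
        simp
    _ = ∫ ξ in (0:ℝ)..1, innerSL ℝ (u₁ - u₀) (∇ H (AffineMap.lineMap u₀ u₁ ξ)) := by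
        simp only [innerSL_apply_apply, real_inner_comm]
    _ = ⟪∫ ξ in (0:ℝ)..1, ∇ H (AffineMap.lineMap u₀ u₁ ξ), u₁ - u₀⟫ := by
        rw [ContinuousLinearMap.intervalIntegral_comp_comm _ (hcont.intervalIntegrable 0 1),
          innerSL_apply_apply, real_inner_comm]

end

/-- Monotonic energy dissipation by the average vector field (AVF) method applied to
`u' = N ∇H(u)` with constant negative-semidefinite (not necessarily symmetric) `N`. -/
theorem avf_energy_dissipation {k : ℕ}
    (H : EuclideanSpace ℝ (Fin k) → ℝ) (hH : ContDiff ℝ 1 H)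
    (N : Matrix (Fin k) (Fin k) ℝ) (hN : ∀ x : Fin k → ℝ, x ⬝ᵥ N.mulVec x ≤ 0)
    (Δt : ℝ) (hΔt : 0 < Δt) (u₀ u₁ : EuclideanSpace ℝ (Fin k))
    (havf : Δt⁻¹ • (u₁ - u₀) = ∫ ξ in (0:ℝ)..1,
      ((WithLp.toLp 2 <| N.mulVec ((gradient H ((1 - ξ) • u₀ + ξ • u₁) : EuclideanSpace ℝ (Fin k))) :
        EuclideanSpace ℝ (Fin k)))) :
    H u₁ ≤ H u₀ := by
  set g := ∫ ξ in (0:ℝ)..1, ∇ H ((1 - ξ) • u₀ + ξ • u₁)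
  have hstep : u₁ - u₀ = Δt • toEuclideanCLM (𝕜 := ℝ) N g := by
    have hint : IntervalIntegrable (fun ξ : ℝ => ∇ H ((1 - ξ) • u₀ + ξ • u₁))
        MeasureTheory.volume 0 1 :=
      (hH.continuous_gradient.comp (by fun_prop)).intervalIntegrable 0 1
    rw [← (toEuclideanCLM (𝕜 := ℝ) N).intervalIntegral_comp_comm hint]
    exact (smul_inv_smul₀ hΔt.ne' _).symm.trans (congrArg (Δt • ·) havf)
  have henergy := hH.sub_eq_inner_integral_gradient_segment u₀ u₁
  rw [hstep, real_inner_smul_right, inner_toEuclideanCLM] at henergy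
  linarith [mul_nonpos_of_nonneg_of_nonpos hΔt.le (hN g)]
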